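/- arXiv:1704.00111 — 6 statements merged into one kernel-verified Lean document; each statement's English description precedes it below -/
import Mathlib

section
/- For v, w ∈ W, let A_{v,w} : V → V be the linear map with A_{v,w}(u) = 0 for u ∈ W, A_{v,w}(η) = η(w)v − η(v)w for η ∈ W*, and A_{v,w}(e) = 0. Then for all v, w ∈ W, x ∈ V and a ∈ Δ: π(A_{v,w}(x) ⊗ a) + π(x ⊗ X_v(X_w(a))) = X_v(X_w(π(x ⊗ a))). (This is the equivariance of π with respect to the summand ⋀²W of 𝔰𝔬(2m+1).) -/
noncomputable section

open TensorProduct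

/-- `W = ℂ^m`. -/
abbrev SpinW (m : ℕ) : Type := Fin m → ℂ

/-- `Δ = ⋀ W`, the exterior algebra of `W`. -/
abbrev SpinDelta (m : ℕ) : Type := ExteriorAlgebra ℂ (SpinW m)

/-- `V = W ⊕ W* ⊕ ℂe`. -/
abbrev SpinV (m : ℕ) : Type := SpinW m × Module.Dual ℂ (SpinW m) × ℂ

/-- The standard basis vector `w_i` of `W`. -/
def wB (m : ℕ) (i : Fin m) : SpinW m := Pi.single i 1

/-- The dual basis vector `w_i*` of `W*`. -/
def wD (m : ℕ) (i : Fin m) : Module.Dual ℂ (SpinW m) := LinearMap.proj i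

/-- `w_i` regarded as an element of `V`. -/
def wV (m : ℕ) (i : Fin m) : SpinV m := (wB m i, 0, 0)

/-- `w_i*` regarded as an element of `V`. -/
def wsV (m : ℕ) (i : Fin m) : SpinV m := (0, wD m i, 0)

/-- `e` regarded as an element of `V`. -/
def eV (m : ℕ) : SpinV m := (0, 0, 1)

/-- `X_v : Δ → Δ`, left exterior multiplication by `v ∈ W`. -/
def Xop (m : ℕ) (v : SpinW m) : SpinDelta m →ₗ[ℂ] SpinDelta m :=
  LinearMap.mulLeft ℂ (ExteriorAlgebra.ι ℂ v)

/-- `D_λ : Δ → Δ`, the interior product with `λ ∈ W*`;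
it satisfies `D_λ(v₁ ∧ ⋯ ∧ v_k) = Σ (−1)^{i−1} λ(v_i) v₁ ∧ ⋯ ∧ v̂_i ∧ ⋯ ∧ v_k`. -/
def Dop (m : ℕ) (lam : Module.Dual ℂ (SpinW m)) : SpinDelta m →ₗ[ℂ] SpinDelta m :=
  CliffordAlgebra.contractLeft (Q := (0 : QuadraticForm ℂ (SpinW m))) lam

/-- The grading operator `D : Δ → Δ` acting by `(−1)^k` on `⋀^k W`. -/
def Gop (m : ℕ) : SpinDelta m →ₗ[ℂ] SpinDelta m :=
  (CliffordAlgebra.involute (Q := (0 : QuadraticForm ℂ (SpinW m)))).toLinearMap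

/-- Projection `V → W`. -/
def pW (m : ℕ) : SpinV m →ₗ[ℂ] SpinW m := LinearMap.fst ℂ _ _

/-- Projection `V → W*`. -/
def pD (m : ℕ) : SpinV m →ₗ[ℂ] Module.Dual ℂ (SpinW m) :=
  (LinearMap.fst ℂ _ ℂ).comp (LinearMap.snd ℂ (SpinW m) _)

/-- Projection `V → ℂ` (the `e`-coordinate). -/
def pC (m : ℕ) : SpinV m →ₗ[ℂ] ℂ :=
  (LinearMap.snd ℂ _ ℂ).comp (LinearMap.snd ℂ (SpinW m) _)

/-- Inclusion `W → V`. -/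
def iW (m : ℕ) : SpinW m →ₗ[ℂ] SpinV m :=
  LinearMap.inl ℂ (SpinW m) (Module.Dual ℂ (SpinW m) × ℂ)

/-- Inclusion `W* → V`. -/
def iD (m : ℕ) : Module.Dual ℂ (SpinW m) →ₗ[ℂ] SpinV m :=
  (LinearMap.inr ℂ (SpinW m) _).comp (LinearMap.inl ℂ (Module.Dual ℂ (SpinW m)) ℂ)

/-- Inclusion `ℂe → V`. -/
def iC (m : ℕ) : ℂ →ₗ[ℂ] SpinV m :=
  (LinearMap.inr ℂ (SpinW m) _).comp (LinearMap.inr ℂ (Module.Dual ℂ (SpinW m)) ℂ)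

/-- The symmetric bilinear form `ω` on `V`:
`ω((u,η,c),(u',η',c')) = η'(u) + η(u') + c·c'`; so `ω(w_i, w_j*) = δ_{ij}`,
`ω(e,e) = 1`, `W` and `W*` are isotropic and `e` is orthogonal to both. -/
def omegaB (m : ℕ) : SpinV m →ₗ[ℂ] SpinV m →ₗ[ℂ] ℂ :=
  ((((LinearMap.llcomp ℂ (SpinV m) (SpinW m) ℂ).flip (pW m)).comp (pD m)).flip
  + ((LinearMap.llcomp ℂ (SpinV m) (SpinW m) ℂ).flip (pW m)).comp (pD m))
  + (pC m).smulRight (pC m)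

/-- The spin projection `π : V ⊗ Δ → Δ` as a bilinear map:
`(v,λ,c) ⊗ a ↦ √2 X_v(a) + √2 D_λ(a) + c D(a)`. -/
def piB (m : ℕ) : SpinV m →ₗ[ℂ] SpinDelta m →ₗ[ℂ] SpinDelta m :=
  (Real.sqrt 2 : ℂ) • (((LinearMap.mul ℂ (SpinDelta m)).comp ((ExteriorAlgebra.ι ℂ).comp (pW m)))
      + (CliffordAlgebra.contractLeft (Q := (0 : QuadraticForm ℂ (SpinW m)))).comp (pD m))
  + (pC m).smulRight (Gop m)

/-- The spin projection `π : V ⊗ Δ → Δ`. -/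
def piMap (m : ℕ) : SpinV m ⊗[ℂ] SpinDelta m →ₗ[ℂ] SpinDelta m :=
  TensorProduct.lift (piB m)

/-- The spin injection `ι : Δ → V ⊗ Δ`,
`a ↦ √2 Σᵢ (wᵢ ⊗ D_{wᵢ*}(a) + wᵢ* ⊗ X_{wᵢ}(a)) + e ⊗ D(a)`. -/
def iotaMap (m : ℕ) : SpinDelta m →ₗ[ℂ] SpinV m ⊗[ℂ] SpinDelta m :=
  (Real.sqrt 2 : ℂ) • (∑ i : Fin m,
      ((TensorProduct.mk ℂ (SpinV m) (SpinDelta m) (wV m i)).comp (Dop m (wD m i))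
        + (TensorProduct.mk ℂ (SpinV m) (SpinDelta m) (wsV m i)).comp (Xop m (wB m i))))
  + (TensorProduct.mk ℂ (SpinV m) (SpinDelta m) (eV m)).comp (Gop m)

/-- The invariant element `θ = Σᵢ (wᵢ ⊗ wᵢ* + wᵢ* ⊗ wᵢ) + e ⊗ e ∈ V ⊗ V`. -/
def theta (m : ℕ) : SpinV m ⊗[ℂ] SpinV m :=
  (∑ i : Fin m, (wV m i ⊗ₜ wsV m i + wsV m i ⊗ₜ wV m i)) + eV m ⊗ₜ eV m

/-- Evaluation of a dual vector at `w ∈ W`. -/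
def evalW (m : ℕ) (w : SpinW m) : Module.Dual ℂ (SpinW m) →ₗ[ℂ] ℂ :=
  Module.Dual.eval ℂ (SpinW m) w

/-- `A_{v,w} : V → V`, with `A(u) = 0`, `A(η) = η(w)v − η(v)w`, `A(e) = 0`. -/
def Amap (m : ℕ) (v w : SpinW m) : SpinV m →ₗ[ℂ] SpinV m :=
  (iW m) ∘ₗ (((evalW m w).smulRight v - (evalW m v).smulRight w) ∘ₗ pD m)

/-- `B_λ : V → V`, with `B(u) = λ(u)e`, `B(η) = 0`, `B(e) = −λ`. -/
def Bmap (m : ℕ) (lam : Module.Dual ℂ (SpinW m)) : SpinV m →ₗ[ℂ] SpinV m :=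
  (iC m) ∘ₗ (lam ∘ₗ pW m) - (iD m) ∘ₗ ((pC m).smulRight lam)

/-- `C_v : V → V`, with `C(u) = 0`, `C(η) = −η(v)e`, `C(e) = v`. -/
def Cmap (m : ℕ) (v : SpinW m) : SpinV m →ₗ[ℂ] SpinV m :=
  (iW m) ∘ₗ ((pC m).smulRight v) - (iC m) ∘ₗ ((evalW m v) ∘ₗ pD m)

/-- `H_{v,λ} : V → V`, with `H(u) = λ(u)v`, `H(η) = −η(v)λ`, `H(e) = 0`. -/
def Hmap (m : ℕ) (v : SpinW m) (lam : Module.Dual ℂ (SpinW m)) : SpinV m →ₗ[ℂ] SpinV m :=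
  (iW m) ∘ₗ ((lam ∘ₗ pW m).smulRight v) - (iD m) ∘ₗ (((evalW m v) ∘ₗ pD m).smulRight lam)

/-- `E_{λ,μ} : V → V`, with `E(u) = μ(u)λ − λ(u)μ`, `E(η) = 0`, `E(e) = 0`. -/
def Emap (m : ℕ) (lam mu : Module.Dual ℂ (SpinW m)) : SpinV m →ₗ[ℂ] SpinV m :=
  (iD m) ∘ₗ ((mu ∘ₗ pW m).smulRight lam - (lam ∘ₗ pW m).smulRight mu)

/-- The contraction `ω ⊗ id_Δ : V ⊗ (V ⊗ Δ) → Δ`, `x ⊗ y ⊗ b ↦ ω(x,y) b`. -/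
def contrMap (m : ℕ) : SpinV m ⊗[ℂ] (SpinV m ⊗[ℂ] SpinDelta m) →ₗ[ℂ] SpinDelta m :=
  (TensorProduct.lid ℂ (SpinDelta m)).toLinearMap
    ∘ₗ (TensorProduct.map (TensorProduct.lift (omegaB m)) LinearMap.id)
    ∘ₗ (TensorProduct.assoc ℂ (SpinV m) (SpinV m) (SpinDelta m)).symm.toLinearMap

/-- The swap `τ ⊗ id_Δ : V ⊗ (V ⊗ Δ) → V ⊗ (V ⊗ Δ)`, `x ⊗ y ⊗ b ↦ y ⊗ x ⊗ b`. -/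
def swapMap (m : ℕ) :
    SpinV m ⊗[ℂ] (SpinV m ⊗[ℂ] SpinDelta m) →ₗ[ℂ] SpinV m ⊗[ℂ] (SpinV m ⊗[ℂ] SpinDelta m) :=
  (TensorProduct.assoc ℂ (SpinV m) (SpinV m) (SpinDelta m)).toLinearMap
    ∘ₗ (LinearMap.rTensor (SpinDelta m) (TensorProduct.comm ℂ (SpinV m) (SpinV m)).toLinearMap)
    ∘ₗ (TensorProduct.assoc ℂ (SpinV m) (SpinV m) (SpinDelta m)).symm.toLinearMap

/-
Write `X_v X_w a = v ∧ w ∧ a`. Multiplication by the even element `v ∧ w` commutes with exterior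
multiplication by any `u ∈ W` and with the grading operator. The interior product is an odd
derivation, so `D_η (v ∧ w ∧ a) = η(v) w ∧ a − η(w) v ∧ a + v ∧ w ∧ D_η a`, and the two extra terms
cancel against `π(A_{v,w}(η) ⊗ a) = √2 (η(w) v − η(v) w) ∧ a`.
-/

namespace CliffordAlgebra

variable {R M : Type*} [CommRing R] [AddCommGroup M] [Module R M] {Q : QuadraticForm R M}

theorem contractLeft_ι_mul_ι_mul (d : Module.Dual R M) (v w : M) (b : CliffordAlgebra Q) :
    contractLeft d (ι Q v * (ι Q w * b))
      = d v • (ι Q w * b) - d w • (ι Q v * b) + ι Q v * (ι Q w * contractLeft d b) := by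
  rw [contractLeft_ι_mul, contractLeft_ι_mul, mul_sub, mul_smul_comm]
  abel

theorem involute_ι_mul_ι_mul (v w : M) (b : CliffordAlgebra Q) :
    involute (ι Q v * (ι Q w * b)) = ι Q v * (ι Q w * involute b) := by
  simp only [map_mul, involute_ι, neg_mul, mul_neg, neg_neg]

end CliffordAlgebra

namespace ExteriorAlgebra

variable {R M : Type*} [CommRing R] [AddCommGroup M] [Module R M]

theorem ι_mul_ι_eq_neg (x y : M) : ι R x * ι R y = -(ι R y * ι R x) :=
  eq_neg_of_add_eq_zero_left (ι_add_mul_swap x y)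

theorem commute_ι_ι_mul_ι (u v w : M) : Commute (ι R u) (ι R v * ι R w) := by
  simp only [Commute, SemiconjBy, ← mul_assoc, ι_mul_ι_eq_neg u v, neg_mul]
  rw [mul_assoc, ι_mul_ι_eq_neg u w, mul_neg, neg_neg, mul_assoc]

theorem ι_mul_ι_mul_ι_mul (u v w : M) (a : ExteriorAlgebra R M) :
    ι R u * (ι R v * (ι R w * a)) = ι R v * (ι R w * (ι R u * a)) := by
  simp only [← mul_assoc, (commute_ι_ι_mul_ι u v w).eq]

end ExteriorAlgebra

theorem piMap_tmul (m : ℕ) (y : SpinV m) (a : SpinDelta m) :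
    piMap m (y ⊗ₜ a) = (Real.sqrt 2 : ℂ) • (ExteriorAlgebra.ι ℂ y.1 * a
      + CliffordAlgebra.contractLeft (Q := (0 : QuadraticForm ℂ (SpinW m))) y.2.1 a)
      + y.2.2 • CliffordAlgebra.involute (Q := (0 : QuadraticForm ℂ (SpinW m))) a := by
  simp [piMap, piB, Gop, pW, pD, pC]

theorem Amap_apply (m : ℕ) (v w u : SpinW m) (η : Module.Dual ℂ (SpinW m)) (c : ℂ) :
    Amap m v w (u, η, c) = (η w • v - η v • w, 0, 0) :=
  rfl

theorem spin_projection_equivariant_wedgeW_general (m : ℕ)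
    (v w : SpinW m) (x : SpinV m) (a : SpinDelta m) :
    piMap m ((Amap m v w x) ⊗ₜ a) + piMap m (x ⊗ₜ (Xop m v (Xop m w a)))
      = Xop m v (Xop m w (piMap m (x ⊗ₜ a))) := by
  obtain ⟨u, η, c⟩ := x
  simp only [Amap_apply, piMap_tmul, Xop, LinearMap.mulLeft_apply,
    CliffordAlgebra.contractLeft_ι_mul_ι_mul, CliffordAlgebra.involute_ι_mul_ι_mul,
    ExteriorAlgebra.ι_mul_ι_mul_ι_mul u v w, map_sub, map_smul, map_zero, sub_mul, smul_mul_assoc,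
    LinearMap.zero_apply, zero_smul, add_zero, mul_add, mul_smul_comm, smul_add]
  module

/-- Equivariance of `π` with respect to the summand `⋀²W` of `𝔰𝔬(2m+1)`:
`π(A_{v,w}(x) ⊗ a) + π(x ⊗ X_v(X_w(a))) = X_v(X_w(π(x ⊗ a)))`. -/
theorem spin_projection_equivariant_wedgeW (m : ℕ) (hm : 1 ≤ m)
    (v w : SpinW m) (x : SpinV m) (a : SpinDelta m) :
    piMap m ((Amap m v w x) ⊗ₜ a) + piMap m (x ⊗ₜ (Xop m v (Xop m w a)))
      = Xop m v (Xop m w (piMap m (x ⊗ₜ a))) :=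
  spin_projection_equivariant_wedgeW_general m v w x a
end
end

section
/- For v ∈ W, let C_v : V → V be the linear map with C_v(u) = 0 for u ∈ W, C_v(η) = −η(v)e for η ∈ W*, and C_v(e) = v. Then for all v ∈ W, x ∈ V and a ∈ Δ: π(C_v(x) ⊗ a) + (1/√2) π(x ⊗ X_v(D(a))) = (1/√2) X_v(D(π(x ⊗ a))). (This is the equivariance of π with respect to the summand W ⊗ e of 𝔰𝔬(2m+1).) -/
noncomputable section

open TensorProduct

lemma involute_contractLeft_aux (m : ℕ) (d : Module.Dual ℂ (SpinW m)) (x : SpinDelta m) :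
    CliffordAlgebra.involute (Q := (0 : QuadraticForm ℂ (SpinW m)))
      (CliffordAlgebra.contractLeft d x)
      = - CliffordAlgebra.contractLeft d (CliffordAlgebra.involute x) := by
  induction x using CliffordAlgebra.left_induction with
  | algebraMap r => simp
  | add x y hx hy => simp only [map_add, hx, hy, neg_add]
  | ι_mul x w hx =>
      rw [CliffordAlgebra.contractLeft_ι_mul, map_sub, map_smul, map_mul,
        CliffordAlgebra.involute_ι, hx]
      simp only [map_mul, CliffordAlgebra.involute_ι, neg_mul, map_neg, mul_neg, neg_neg,
        CliffordAlgebra.contractLeft_ι_mul]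

/-- Equivariance of `π` with respect to the summand `W ⊗ e` of `𝔰𝔬(2m+1)`:
`π(C_v(x) ⊗ a) + (1/√2) π(x ⊗ X_v(D(a))) = (1/√2) X_v(D(π(x ⊗ a)))`. -/
theorem spin_projection_equivariant_W_e (m : ℕ) (hm : 1 ≤ m)
    (v : SpinW m) (x : SpinV m) (a : SpinDelta m) :
    piMap m ((Cmap m v x) ⊗ₜ a)
        + ((Real.sqrt 2 : ℂ))⁻¹ • piMap m (x ⊗ₜ (Xop m v (Gop m a)))
      = ((Real.sqrt 2 : ℂ))⁻¹ • Xop m v (Gop m (piMap m (x ⊗ₜ a))) := by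

  obtain ⟨u, η, c⟩ := x
  have hs : (Real.sqrt 2 : ℂ) * (Real.sqrt 2 : ℂ) = 2 := by
    rw [← Complex.ofReal_mul, Real.mul_self_sqrt (by norm_num : (0:ℝ) ≤ 2)]
    norm_num
  have hs0 : (Real.sqrt 2 : ℂ) ≠ 0 := by
    intro h
    rw [h, mul_zero] at hs
    norm_num at hs
  simp only [piMap, piB, Cmap, Gop, Xop, pW, pD, pC, iW, iC, evalW,
    TensorProduct.lift.tmul, LinearMap.add_apply, LinearMap.smul_apply,
    LinearMap.sub_apply, LinearMap.comp_apply, LinearMap.coe_comp,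
    Function.comp_apply, LinearMap.smulRight_apply, LinearMap.fst_apply,
    LinearMap.snd_apply, LinearMap.inl_apply, LinearMap.inr_apply,
    LinearMap.mul_apply', LinearMap.mulLeft_apply, AlgHom.toLinearMap_apply,
    Module.Dual.eval_apply, map_add, map_smul, map_zero, map_mul,
    CliffordAlgebra.involute_ι, CliffordAlgebra.involute_involute,
    CliffordAlgebra.contractLeft_ι_mul, smul_add, mul_add, add_mul,
    mul_neg, neg_mul, smul_neg, neg_smul, smul_smul, LinearMap.map_smulₛₗ,
    RingHom.id_apply, Prod.smul_mk, Prod.mk_sub_mk, involute_contractLeft_aux,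
    map_neg, sub_zero, zero_sub, smul_zero, zero_smul, add_zero, zero_add, neg_neg,
    inv_mul_cancel₀ hs0, one_smul, ExteriorAlgebra.ι, LinearMap.neg_apply,
    LinearMap.zero_apply, neg_zero]
  have h1 : CliffordAlgebra.ι (0 : QuadraticForm ℂ (SpinW m)) u * CliffordAlgebra.ι 0 v
      = -(CliffordAlgebra.ι 0 v * CliffordAlgebra.ι 0 u) :=
    eq_neg_of_add_eq_zero_left (ExteriorAlgebra.ι_add_mul_swap u v)
  have h2 : ((Real.sqrt 2 : ℂ)) * c = ((Real.sqrt 2 : ℂ))⁻¹ * c + ((Real.sqrt 2 : ℂ))⁻¹ * c := by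
    field_simp
    linear_combination c * hs
  rw [← mul_assoc, h1, neg_mul, mul_assoc, h2, add_smul]
  abel
end
end

section
/- For v, w ∈ W, let A_{v,w} : V → V be the linear map with A_{v,w}(u) = 0 for u ∈ W, A_{v,w}(η) = η(w)v − η(v)w for η ∈ W*, and A_{v,w}(e) = 0. Then for all v, w ∈ W and a ∈ Δ: ι(X_v(X_w(a))) = (A_{v,w} ⊗ id_Δ)(ι(a)) + (id_V ⊗ (X_v ∘ X_w))(ι(a)). (This is the equivariance of ι with respect to the summand ⋀²W of 𝔰𝔬(2m+1).) -/
noncomputable section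

open TensorProduct

section SpinAux

variable {m : ℕ}

private lemma extι_eq : ExteriorAlgebra.ι ℂ (M := SpinW m)
    = CliffordAlgebra.ι (0 : QuadraticForm ℂ (SpinW m)) := rfl

private lemma Xop_apply (u : SpinW m) (x : SpinDelta m) :
    Xop m u x = ExteriorAlgebra.ι ℂ u * x := rfl

private lemma X_anticomm (x y : SpinW m) :
    ExteriorAlgebra.ι ℂ x * ExteriorAlgebra.ι ℂ y
      = -(ExteriorAlgebra.ι ℂ y * ExteriorAlgebra.ι ℂ x) := by
  rw [extι_eq]
  have h := CliffordAlgebra.ι_mul_ι_add_swap (Q := (0 : QuadraticForm ℂ (SpinW m))) x y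
  simp only [QuadraticMap.polar, QuadraticMap.zero_apply, map_zero] at h
  rw [eq_neg_iff_add_eq_zero]
  simpa using h

private lemma X_X_X (u v w : SpinW m) (b : SpinDelta m) :
    Xop m u (Xop m v (Xop m w b)) = Xop m v (Xop m w (Xop m u b)) := by
  simp only [Xop_apply, ← mul_assoc]
  rw [X_anticomm u v, neg_mul, neg_mul, mul_assoc ((ExteriorAlgebra.ι ℂ) v),
    X_anticomm u w, mul_neg, neg_mul, neg_neg, ← mul_assoc]

private lemma G_XX (v w : SpinW m) (b : SpinDelta m) :
    Gop m (Xop m v (Xop m w b)) = Xop m v (Xop m w (Gop m b)) := by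
  simp only [Xop_apply, Gop, extι_eq, AlgHom.toLinearMap_apply, map_mul,
    CliffordAlgebra.involute_ι, neg_mul, mul_neg, neg_neg]

private lemma D_XX (lam : Module.Dual ℂ (SpinW m)) (v w : SpinW m) (b : SpinDelta m) :
    Dop m lam (Xop m v (Xop m w b))
      = lam v • Xop m w b - lam w • Xop m v b + Xop m v (Xop m w (Dop m lam b)) := by
  simp only [Xop_apply, Dop, extι_eq, CliffordAlgebra.contractLeft_ι_mul, mul_sub, mul_smul_comm]
  abel

private lemma wD_apply (i : Fin m) (u : SpinW m) : wD m i u = u i := rfl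

private lemma Amap_wV (v w : SpinW m) (i : Fin m) : Amap m v w (wV m i) = 0 := by
  simp [Amap, wV, pD, iW]

private lemma Amap_eV (v w : SpinW m) : Amap m v w (eV m) = 0 := by
  simp [Amap, eV, pD, iW]

private lemma Amap_wsV (v w : SpinW m) (i : Fin m) :
    Amap m v w (wsV m i) = w i • iW m v - v i • iW m w := by
  simp [Amap, wsV, pD, iW, evalW, wD_apply, smul_sub, Prod.ext_iff]

private lemma sum_smul_wB (v : SpinW m) : ∑ i, v i • wB m i = v := by
  ext j
  simp [wB, Pi.single_apply]

private lemma sum_smul_wV_tmul (v : SpinW m) (b : SpinDelta m) :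
    ∑ i, v i • (wV m i ⊗ₜ[ℂ] b) = iW m v ⊗ₜ[ℂ] b := by
  simp_rw [TensorProduct.smul_tmul', ← TensorProduct.sum_tmul]
  congr 1
  simp only [wV, iW, Prod.smul_mk, smul_zero]
  rw [Prod.ext_iff]
  constructor
  · rw [Prod.fst_sum]; exact sum_smul_wB v
  · rw [Prod.snd_sum]; simp

private lemma sum_smul_X (u : SpinW m) (b : SpinDelta m) :
    ∑ i, u i • Xop m (wB m i) b = Xop m u b := by
  simp_rw [Xop_apply, ← smul_mul_assoc, ← Finset.sum_mul, ← map_smul, ← map_sum, sum_smul_wB]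

private lemma sum_smul_tmul_X (u : SpinW m) (z : SpinV m) (b : SpinDelta m) :
    ∑ i, u i • (z ⊗ₜ[ℂ] Xop m (wB m i) b) = z ⊗ₜ[ℂ] Xop m u b := by
  simp_rw [← TensorProduct.tmul_smul, ← TensorProduct.tmul_sum, sum_smul_X]

private lemma iota_apply (x : SpinDelta m) :
    iotaMap m x = (Real.sqrt 2 : ℂ) • ∑ i : Fin m,
        (wV m i ⊗ₜ[ℂ] Dop m (wD m i) x + wsV m i ⊗ₜ[ℂ] Xop m (wB m i) x)
      + eV m ⊗ₜ[ℂ] Gop m x := by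
  simp only [iotaMap, LinearMap.add_apply, LinearMap.smul_apply, LinearMap.sum_apply,
    LinearMap.comp_apply, TensorProduct.mk_apply]

end SpinAux

set_option maxHeartbeats 1000000 in
/-- Equivariance of `ι` with respect to the summand `⋀²W` of `𝔰𝔬(2m+1)`:
`ι(X_v(X_w(a))) = (A_{v,w} ⊗ id_Δ)(ι(a)) + (id_V ⊗ (X_v ∘ X_w))(ι(a))`. -/
theorem spin_injection_equivariant_wedgeW (m : ℕ) (hm : 1 ≤ m)
    (v w : SpinW m) (a : SpinDelta m) :
    iotaMap m (Xop m v (Xop m w a))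
      = LinearMap.rTensor (SpinDelta m) (Amap m v w) (iotaMap m a)
        + LinearMap.lTensor (SpinV m) ((Xop m v) ∘ₗ (Xop m w)) (iotaMap m a) := by
  classical
  rw [iota_apply, iota_apply]
  simp only [map_add, map_smul, map_sum, LinearMap.rTensor_tmul, LinearMap.lTensor_tmul,
    LinearMap.comp_apply, Amap_wV, Amap_eV, Amap_wsV, TensorProduct.zero_tmul, zero_add, add_zero,
    D_XX, X_X_X, G_XX, wD_apply]
  simp only [TensorProduct.tmul_add, TensorProduct.tmul_sub, TensorProduct.tmul_smul,
    TensorProduct.sub_tmul, TensorProduct.smul_tmul']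
  have h1 : ∑ i : Fin m, (v i • wV m i) ⊗ₜ[ℂ] Xop m w a = iW m v ⊗ₜ[ℂ] Xop m w a := by
    simp_rw [← TensorProduct.smul_tmul']; exact sum_smul_wV_tmul v _
  have h2 : ∑ i : Fin m, (w i • wV m i) ⊗ₜ[ℂ] Xop m v a = iW m w ⊗ₜ[ℂ] Xop m v a := by
    simp_rw [← TensorProduct.smul_tmul']; exact sum_smul_wV_tmul w _
  have h3 : ∑ i : Fin m, (w i • iW m v) ⊗ₜ[ℂ] Xop m (wB m i) a = iW m v ⊗ₜ[ℂ] Xop m w a := by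
    simp_rw [← TensorProduct.smul_tmul']; exact sum_smul_tmul_X w _ a
  have h4 : ∑ i : Fin m, (v i • iW m w) ⊗ₜ[ℂ] Xop m (wB m i) a = iW m w ⊗ₜ[ℂ] Xop m v a := by
    simp_rw [← TensorProduct.smul_tmul']; exact sum_smul_tmul_X v _ a
  simp_rw [Finset.sum_add_distrib, Finset.sum_sub_distrib]
  rw [h1, h2, h3, h4]
  module
end
end

section
/- For λ ∈ W*, let B_λ : V → V be the linear map with B_λ(u) = λ(u)e for u ∈ W, B_λ(η) = 0 for η ∈ W*, and B_λ(e) = −λ. Then for all λ ∈ W* and a ∈ Δ: ι((1/√2) D(D_λ(a))) = (B_λ ⊗ id_Δ)(ι(a)) + (id_V ⊗ (1/√2)(D ∘ D_λ))(ι(a)). (This is the equivariance of ι with respect to the summand W* ⊗ e of 𝔰𝔬(2m+1).) -/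
noncomputable section

open TensorProduct

namespace SpinAuxEq

lemma aux_GG (m : ℕ) (x : SpinDelta m) : Gop m (Gop m x) = x :=
  CliffordAlgebra.involute_involute x

lemma aux_GX (m : ℕ) (v : SpinW m) (x : SpinDelta m) :
    Gop m (Xop m v x) = - Xop m v (Gop m x) := by
  show CliffordAlgebra.involute (ExteriorAlgebra.ι ℂ v * x)
      = -(ExteriorAlgebra.ι ℂ v * CliffordAlgebra.involute x)
  rw [map_mul, CliffordAlgebra.involute_ι, neg_mul]

lemma aux_DX (m : ℕ) (lam : Module.Dual ℂ (SpinW m)) (v : SpinW m) (x : SpinDelta m) :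
    Dop m lam (Xop m v x) = lam v • x - Xop m v (Dop m lam x) :=
  CliffordAlgebra.contractLeft_ι_mul lam v x

lemma aux_DD (m : ℕ) (lam mu : Module.Dual ℂ (SpinW m)) (x : SpinDelta m) :
    Dop m lam (Dop m mu x) = - Dop m mu (Dop m lam x) :=
  CliffordAlgebra.contractLeft_comm lam mu x

lemma aux_DG (m : ℕ) (lam : Module.Dual ℂ (SpinW m)) (x : SpinDelta m) :
    Dop m lam (Gop m x) = - Gop m (Dop m lam x) := by
  show CliffordAlgebra.contractLeft lam (CliffordAlgebra.involute x)
      = - CliffordAlgebra.involute (CliffordAlgebra.contractLeft lam x)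
  induction x using CliffordAlgebra.left_induction with
  | algebraMap r => simp
  | add x y hx hy => rw [map_add, map_add, map_add, map_add, hx, hy, neg_add]
  | ι_mul x v hx =>
    simp only [map_mul, CliffordAlgebra.involute_ι, neg_mul, map_neg,
      CliffordAlgebra.contractLeft_ι_mul, map_sub, LinearMap.map_smul, map_smul, hx, mul_neg,
      neg_sub, neg_neg, sub_neg_eq_add]

lemma hexp (m : ℕ) (b : SpinDelta m) : iotaMap m b
    = (Real.sqrt 2 : ℂ) • ∑ i, (wV m i ⊗ₜ[ℂ] Dop m (wD m i) b + wsV m i ⊗ₜ[ℂ] Xop m (wB m i) b)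
      + eV m ⊗ₜ[ℂ] Gop m b := by
  simp [iotaMap, LinearMap.sum_apply, TensorProduct.mk_apply]
  norm_cast

lemma hlam (m : ℕ) (lam : Module.Dual ℂ (SpinW m)) :
    lam = ∑ i, lam (wB m i) • wD m i := by
  refine LinearMap.ext fun x => ?_
  rw [LinearMap.pi_apply_eq_sum_univ lam x, LinearMap.sum_apply]
  refine Finset.sum_congr rfl fun i _ => ?_
  have : wB m i = Pi.single i 1 := rfl
  simp only [wD, this, LinearMap.smul_apply, LinearMap.proj_apply, smul_eq_mul, mul_comm]
  have h2 : (fun j => if i = j then (1:ℂ) else 0) = Pi.single i 1 := by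
    funext j
    rw [Pi.single_apply]
    simp [eq_comm]
  rw [h2]

lemma hDsum (m : ℕ) (lam : Module.Dual ℂ (SpinW m)) (b : SpinDelta m) :
    ∑ i, lam (wB m i) • Dop m (wD m i) b = Dop m lam b := by
  conv_rhs => rw [hlam m lam]
  show _ = CliffordAlgebra.contractLeft (∑ i, lam (wB m i) • wD m i) b
  rw [map_sum, LinearMap.sum_apply]
  simp [Dop]

lemma hBw (m : ℕ) (lam : Module.Dual ℂ (SpinW m)) (i : Fin m) :
    Bmap m lam (wV m i) = lam (wB m i) • eV m := by
  simp [Bmap, iC, iD, pW, pC, wV, eV, Prod.smul_def]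

lemma hBws (m : ℕ) (lam : Module.Dual ℂ (SpinW m)) (i : Fin m) :
    Bmap m lam (wsV m i) = 0 := by
  simp [Bmap, iC, iD, pW, pC, wsV]

lemma hBe (m : ℕ) (lam : Module.Dual ℂ (SpinW m)) :
    Bmap m lam (eV m) = - ∑ i, lam (wB m i) • wsV m i := by
  have h1 : ∑ i, lam (wB m i) • wsV m i = iD m lam := by
    conv_rhs => rw [hlam m lam]
    rw [map_sum]
    simp [wsV, iD, wD]
  rw [h1]
  simp [Bmap, iC, iD, pW, pC, eV]

end SpinAuxEq

set_option maxHeartbeats 2000000 in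
/-- Equivariance of `ι` with respect to the summand `W* ⊗ e` of `𝔰𝔬(2m+1)`:
`ι((1/√2) D(D_λ(a))) = (B_λ ⊗ id_Δ)(ι(a)) + (id_V ⊗ (1/√2)(D ∘ D_λ))(ι(a))`. -/
theorem spin_injection_equivariant_dual_e (m : ℕ) (hm : 1 ≤ m)
    (lam : Module.Dual ℂ (SpinW m)) (a : SpinDelta m) :
    iotaMap m (((Real.sqrt 2 : ℂ))⁻¹ • Gop m (Dop m lam a))
      = LinearMap.rTensor (SpinDelta m) (Bmap m lam) (iotaMap m a)
        + LinearMap.lTensor (SpinV m)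
            (((Real.sqrt 2 : ℂ))⁻¹ • ((Gop m) ∘ₗ (Dop m lam))) (iotaMap m a) := by
  classical
  open SpinAuxEq in
  have hsne : ((Real.sqrt 2 : ℝ) : ℂ) ≠ 0 := by
    rw [Complex.ofReal_ne_zero]
    positivity
  have hs2 : ((Real.sqrt 2 : ℝ) : ℂ) * ((Real.sqrt 2 : ℝ) : ℂ) = 2 := by
    norm_cast
    exact Real.mul_self_sqrt (by norm_num)
  have hse : ((Real.sqrt 2 : ℝ) : ℂ) - (((Real.sqrt 2 : ℝ) : ℂ))⁻¹ = (((Real.sqrt 2 : ℝ) : ℂ))⁻¹ := by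
    field_simp
    linear_combination hs2
  have key1 : ∀ i : Fin m, Dop m (wD m i) (Gop m (Dop m lam a))
      = Gop m (Dop m lam (Dop m (wD m i) a)) := fun i => by
    rw [aux_DG, aux_DD, map_neg, neg_neg]
  have key2 : ∀ i : Fin m, Xop m (wB m i) (Gop m (Dop m lam a))
      = Gop m (Dop m lam (Xop m (wB m i) a)) - lam (wB m i) • Gop m a := fun i => by
    have h1 := aux_GX m (wB m i) (Dop m lam a)
    have h3 : Xop m (wB m i) (Dop m lam a)
        = lam (wB m i) • a - Dop m lam (Xop m (wB m i) a) := by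
      rw [aux_DX m lam (wB m i) a]
      abel
    calc Xop m (wB m i) (Gop m (Dop m lam a))
        = - Gop m (Xop m (wB m i) (Dop m lam a)) := by rw [h1, neg_neg]
      _ = - Gop m (lam (wB m i) • a - Dop m lam (Xop m (wB m i) a)) := by rw [h3]
      _ = Gop m (Dop m lam (Xop m (wB m i) a)) - lam (wB m i) • Gop m a := by
          rw [map_sub, map_smul]
          abel
  have key3 : Gop m (Dop m lam (Gop m a)) = - Dop m lam a := by
    rw [aux_DG, map_neg, aux_GG]
  rw [hexp, hexp]
  simp only [map_add, map_smul, map_sum, LinearMap.rTensor_tmul, LinearMap.lTensor_tmul,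
    LinearMap.map_smul, LinearMap.smul_apply, LinearMap.comp_apply, hBw m lam, hBws m lam,
    hBe m lam, zero_tmul, key1, key2, key3, aux_GG, TensorProduct.tmul_smul,
    TensorProduct.smul_tmul', TensorProduct.tmul_sub, add_zero]
  have hsum : (∑ x : Fin m, (lam (wB m x) • eV m) ⊗ₜ[ℂ] (Dop m (wD m x)) a)
      = eV m ⊗ₜ[ℂ] Dop m lam a := by
    calc ∑ x : Fin m, (lam (wB m x) • eV m) ⊗ₜ[ℂ] (Dop m (wD m x)) a
        = eV m ⊗ₜ[ℂ] ∑ x : Fin m, lam (wB m x) • (Dop m (wD m x)) a := by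
          rw [TensorProduct.tmul_sum]
          exact Finset.sum_congr rfl fun x _ => TensorProduct.smul_tmul _ _ _
      _ = _ := by rw [hDsum]
  rw [hsum]
  simp only [← TensorProduct.smul_tmul', smul_sub, smul_add, Finset.smul_sum, smul_smul,
    ← mul_assoc, mul_inv_cancel₀ hsne, one_mul, one_smul, neg_tmul, TensorProduct.sum_tmul,
    TensorProduct.tmul_neg, smul_neg, Finset.sum_add_distrib, Finset.sum_sub_distrib]
  have hc2 : ((Real.sqrt 2 : ℝ) : ℂ) • (eV m ⊗ₜ[ℂ] Dop m lam a)
      = (((Real.sqrt 2 : ℝ) : ℂ))⁻¹ • (eV m ⊗ₜ[ℂ] Dop m lam a)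
        + (((Real.sqrt 2 : ℝ) : ℂ))⁻¹ • (eV m ⊗ₜ[ℂ] Dop m lam a) := by
    rw [← add_smul]
    congr 1
    linear_combination hse
  rw [hc2]
  abel
end
end

section
/- Contracting a double spin injection with the bilinear form gives scalar multiplication by the dimension of V: (ω ⊗ id_Δ)((id_V ⊗ ι)(ι(a))) = (2m+1) · a for all a ∈ Δ, where ω ⊗ id_Δ : V ⊗ V ⊗ Δ → Δ denotes the contraction x ⊗ y ⊗ b ↦ ω(x, y) b. -/
noncomputable section

open TensorProduct

lemma contr_tmul (m : ℕ) (x y : SpinV m) (b : SpinDelta m) :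
    contrMap m (x ⊗ₜ (y ⊗ₜ b)) = omegaB m x y • b := by
  simp [contrMap]

lemma omegaB_apply (m : ℕ) (x y : SpinV m) :
    omegaB m x y = x.2.1 y.1 + y.2.1 x.1 + x.2.2 * y.2.2 := by
  simp [omegaB, pW, pD, pC]
  ring

lemma omega_wV_wV (m : ℕ) (i j : Fin m) : omegaB m (wV m i) (wV m j) = 0 := by
  simp [omegaB_apply, wV]

lemma omega_wV_wsV (m : ℕ) (i j : Fin m) :
    omegaB m (wV m i) (wsV m j) = if j = i then 1 else 0 := by
  simp only [omegaB_apply, wV, wsV, wD, wB]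
  simp [Pi.single_apply, eq_comm]

lemma omega_wV_eV (m : ℕ) (i : Fin m) : omegaB m (wV m i) (eV m) = 0 := by
  simp [omegaB_apply, wV, eV]

lemma omega_wsV_wV (m : ℕ) (i j : Fin m) :
    omegaB m (wsV m i) (wV m j) = if j = i then 1 else 0 := by
  simp only [omegaB_apply, wV, wsV, wD, wB]
  simp [Pi.single_apply, eq_comm]

lemma omega_wsV_wsV (m : ℕ) (i j : Fin m) : omegaB m (wsV m i) (wsV m j) = 0 := by
  simp [omegaB_apply, wsV]

lemma omega_wsV_eV (m : ℕ) (i : Fin m) : omegaB m (wsV m i) (eV m) = 0 := by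
  simp [omegaB_apply, wsV, eV]

lemma omega_eV_wV (m : ℕ) (i : Fin m) : omegaB m (eV m) (wV m i) = 0 := by
  simp [omegaB_apply, wV, eV]

lemma omega_eV_wsV (m : ℕ) (i : Fin m) : omegaB m (eV m) (wsV m i) = 0 := by
  simp [omegaB_apply, wsV, eV]

lemma omega_eV_eV (m : ℕ) : omegaB m (eV m) (eV m) = 1 := by
  simp [omegaB_apply, eV]

lemma iota_expand (m : ℕ) (b : SpinDelta m) :
    iotaMap m b = (Real.sqrt 2 : ℂ) • ∑ i : Fin m,
        (wV m i ⊗ₜ[ℂ] Dop m (wD m i) b + wsV m i ⊗ₜ[ℂ] Xop m (wB m i) b)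
      + eV m ⊗ₜ[ℂ] Gop m b := by
  simp [iotaMap]
  rw [← Complex.coe_smul]

lemma contr_x_iota (m : ℕ) (x : SpinV m) (b : SpinDelta m) :
    contrMap m (x ⊗ₜ iotaMap m b)
      = (Real.sqrt 2 : ℂ) • ∑ i : Fin m,
          (omegaB m x (wV m i) • Dop m (wD m i) b + omegaB m x (wsV m i) • Xop m (wB m i) b)
        + omegaB m x (eV m) • Gop m b := by
  simp only [iotaMap, LinearMap.add_apply, LinearMap.smul_apply, LinearMap.coe_sum,
    Finset.sum_apply, LinearMap.comp_apply, TensorProduct.mk_apply, tmul_add, tmul_smul,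
    tmul_sum, map_add, map_smul, map_sum, contr_tmul]

lemma contr_wV_iota (m : ℕ) (i : Fin m) (b : SpinDelta m) :
    contrMap m (wV m i ⊗ₜ iotaMap m b) = (Real.sqrt 2 : ℂ) • Xop m (wB m i) b := by
  rw [contr_x_iota]
  simp [omega_wV_wV, omega_wV_wsV, omega_wV_eV, ite_smul]

lemma contr_wsV_iota (m : ℕ) (i : Fin m) (b : SpinDelta m) :
    contrMap m (wsV m i ⊗ₜ iotaMap m b) = (Real.sqrt 2 : ℂ) • Dop m (wD m i) b := by
  rw [contr_x_iota]
  simp [omega_wsV_wV, omega_wsV_wsV, omega_wsV_eV, ite_smul]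

lemma contr_eV_iota (m : ℕ) (b : SpinDelta m) :
    contrMap m (eV m ⊗ₜ iotaMap m b) = Gop m b := by
  rw [contr_x_iota]
  simp [omega_eV_wV, omega_eV_wsV, omega_eV_eV]

lemma anticomm (m : ℕ) (i : Fin m) (b : SpinDelta m) :
    Dop m (wD m i) (Xop m (wB m i) b) + Xop m (wB m i) (Dop m (wD m i) b) = b := by
  have h := CliffordAlgebra.contractLeft_ι_mul (Q := (0 : QuadraticForm ℂ (SpinW m)))
    (d := wD m i) (wB m i) b
  simp only [Dop, Xop, LinearMap.mulLeft_apply]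
  rw [show (ExteriorAlgebra.ι ℂ : SpinW m →ₗ[ℂ] SpinDelta m)
      = CliffordAlgebra.ι (0 : QuadraticForm ℂ (SpinW m)) from rfl, h]
  have : wD m i (wB m i) = 1 := by simp [wD, wB]
  rw [this, one_smul]
  abel

lemma sqrt2_sq : (Real.sqrt 2 : ℂ) * (Real.sqrt 2 : ℂ) = 2 := by
  rw [← Complex.ofReal_mul, Real.mul_self_sqrt (by norm_num : (0:ℝ) ≤ 2)]
  norm_num

/-- Contracting a double spin injection with the bilinear form gives scalar multiplication
by `dim V = 2m + 1`: `(ω ⊗ id_Δ)((id_V ⊗ ι)(ι(a))) = (2m+1) • a` for all `a ∈ Δ`. -/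
theorem spin_contraction_double_injection (m : ℕ) (hm : 1 ≤ m) (a : SpinDelta m) :
    contrMap m (LinearMap.lTensor (SpinV m) (iotaMap m) (iotaMap m a))
      = (2 * (m : ℂ) + 1) • a := by
  rw [iota_expand]
  simp only [map_add, map_smul, map_sum, LinearMap.lTensor_tmul,
    contr_wV_iota, contr_wsV_iota, contr_eV_iota]
  have hG : Gop m (Gop m a) = a := CliffordAlgebra.involute_involute a
  rw [hG]
  have key : ∀ i : Fin m, (Real.sqrt 2 : ℂ) • Xop m (wB m i) (Dop m (wD m i) a)
      + (Real.sqrt 2 : ℂ) • Dop m (wD m i) (Xop m (wB m i) a)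
      = (Real.sqrt 2 : ℂ) • a := fun i => by
    rw [← smul_add, add_comm, anticomm m i a]
  simp only [key]
  rw [Finset.sum_const, Finset.card_univ, Fintype.card_fin]
  match_scalars
  linear_combination (m : ℂ) * sqrt2_sq
end
end

section
/- The spin representation of 𝔰𝔬(2m+1) on Δ = ⋀W is irreducible: if U ⊆ Δ is a ℂ-linear subspace satisfying X_v(X_w(U)) ⊆ U, X_v(D(U)) ⊆ U, X_v(D_λ(U)) ⊆ U, D(D_λ(U)) ⊆ U, and D_λ(D_μ(U)) ⊆ U for all v, w ∈ W and λ, μ ∈ W*, then U = 0 or U = Δ. -/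
noncomputable section

open TensorProduct

/-! The grading operator `D` anticommutes with every `X_v` and every `D_λ`, so `U ∪ D(U)` is
stable under all of them. For `a ≠ 0` in `U`, let `S` be a set of maximal cardinality among the
monomials `w_S` occurring in `a`: contracting `a` by the `w_i*`, `i ∈ S`, kills every other
monomial and leaves a nonzero scalar, hence `1 ∈ U`. Finally `U ∩ D⁻¹(U)` contains `1` and is
stable under left multiplication by `W`, so it is all of `Δ`. -/

namespace ExteriorAlgebra

open Module Set.powersetCard CliffordAlgebra

variable {R M I : Type*} [CommRing R] [AddCommGroup M] [Module R M] [LinearOrder I]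
  (b : Basis I R M)

lemma basis_empty : b.ExteriorAlgebra ∅ = 1 := by
  rw [basis_apply_ofCard b (Finset.card_empty), ιMulti_family, ιMulti_zero_apply]

lemma basis_singleton (i : I) : b.ExteriorAlgebra {i} = ι R (b i) := by
  rw [basis_apply_ofCard b (Finset.card_singleton i), ιMulti_family, ιMulti_apply]
  simp [ofFinEmbEquiv_symm_apply, ofCard]

lemma basis_eq_units_smul_ι_mul {S : Finset I} {i : I} (hi : i ∈ S) :
    ∃ σ : ℤˣ, b.ExteriorAlgebra S = σ • (ι R (b i) * b.ExteriorAlgebra (S.erase i)) := by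
  have hdisj : Disjoint (ofCard (Finset.card_singleton i)).val
      (ofCard (n := (S.erase i).card) rfl).val := by
    simp [val_ofCard]
  have hS : (disjUnion hdisj).val = S := by
    simp [coe_disjUnion, val_ofCard, Finset.insert_erase hi]
  have := basis_mul_of_disjoint b _ _ hdisj
  rw [val_ofCard, val_ofCard, basis_singleton, hS] at this
  exact ⟨(permOfDisjoint hdisj).sign, by rw [this, smul_smul, Int.units_mul_self, one_smul]⟩

lemma contractLeft_coord_basis_of_notMem {i : I} {T : Finset I} (hi : i ∉ T) :
    contractLeft (Q := 0) (b.coord i) (b.ExteriorAlgebra T) = 0 := by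
  induction T using Finset.strongInduction with
  | H T ih =>
    obtain rfl | ⟨j, hj⟩ := T.eq_empty_or_nonempty
    · rw [basis_empty, contractLeft_one]
    obtain ⟨σ, hσ⟩ := basis_eq_units_smul_ι_mul b hj
    have hij : i ≠ j := by rintro rfl; exact hi hj
    rw [hσ, Units.smul_def, map_zsmul, contractLeft_ι_mul, Basis.coord_apply, Basis.repr_self,
      Finsupp.single_eq_of_ne hij, zero_smul, zero_sub,
      ih _ (Finset.erase_ssubset hj) (fun h => hi (Finset.mem_of_mem_erase h)), mul_zero,
      neg_zero, zsmul_zero]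

lemma contractLeft_coord_basis_of_mem {i : I} {T : Finset I} (hi : i ∈ T) :
    ∃ σ : ℤˣ, contractLeft (Q := 0) (b.coord i) (b.ExteriorAlgebra T) =
      σ • b.ExteriorAlgebra (T.erase i) := by
  obtain ⟨σ, hσ⟩ := basis_eq_units_smul_ι_mul b hi
  refine ⟨σ, ?_⟩
  rw [hσ, Units.smul_def, map_zsmul, contractLeft_ι_mul, Basis.coord_apply, Basis.repr_self,
    Finsupp.single_eq_same, one_smul, ← Units.smul_def,
    contractLeft_coord_basis_of_notMem b (Finset.notMem_erase i T), mul_zero, sub_zero]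

lemma list_prod_contractLeft_coord_basis_of_subset {L : List I} (hL : L.Nodup) {T : Finset I}
    (h : L.toFinset ⊆ T) :
    ∃ σ : ℤˣ, (L.map fun i => contractLeft (Q := 0) (b.coord i)).prod (b.ExteriorAlgebra T) =
      σ • b.ExteriorAlgebra (T \ L.toFinset) := by
  induction L with
  | nil => exact ⟨1, by simp⟩
  | cons j L ih =>
    rw [List.nodup_cons] at hL
    rw [List.toFinset_cons, Finset.insert_subset_iff] at h
    obtain ⟨σ, hσ⟩ := ih hL.2 h.2
    obtain ⟨σ', hσ'⟩ := contractLeft_coord_basis_of_mem b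
      (Finset.mem_sdiff.mpr ⟨h.1, fun hj => hL.1 (List.mem_toFinset.mp hj)⟩)
    refine ⟨σ * σ', ?_⟩
    rw [List.map_cons, List.prod_cons, Module.End.mul_apply, hσ, Units.smul_def, map_zsmul,
      ← Units.smul_def, hσ', smul_smul, List.toFinset_cons, Finset.sdiff_insert]

lemma list_prod_contractLeft_coord_basis_of_not_subset {L : List I} (hL : L.Nodup)
    {T : Finset I} (h : ¬ L.toFinset ⊆ T) :
    (L.map fun i => contractLeft (Q := 0) (b.coord i)).prod (b.ExteriorAlgebra T) = 0 := by
  induction L with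
  | nil => simp at h
  | cons j L ih =>
    rw [List.nodup_cons] at hL
    rw [List.map_cons, List.prod_cons, Module.End.mul_apply]
    by_cases hLT : L.toFinset ⊆ T
    · obtain ⟨σ, hσ⟩ := list_prod_contractLeft_coord_basis_of_subset b hL.2 hLT
      have hj : j ∉ T \ L.toFinset := fun hj => h (by
        rw [List.toFinset_cons]; exact Finset.insert_subset (Finset.mem_sdiff.mp hj).1 hLT)
      rw [hσ, Units.smul_def, map_zsmul, contractLeft_coord_basis_of_notMem b hj, zsmul_zero]
    · rw [ih hL.2 hLT, map_zero]

theorem exists_list_prod_contractLeft_coord_eq_algebraMap {a : ExteriorAlgebra R M} (ha : a ≠ 0) :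
    ∃ (L : List I) (c : R), c ≠ 0 ∧
      (L.map fun i => contractLeft (Q := 0) (b.coord i)).prod a = algebraMap R _ c := by
  set f := b.ExteriorAlgebra.repr a
  have hf : f.support.Nonempty := by
    simpa [Finsupp.support_nonempty_iff, f] using ha
  obtain ⟨S, hS, hmax⟩ := Finset.exists_max_image f.support Finset.card hf
  obtain ⟨σ, hσ⟩ := list_prod_contractLeft_coord_basis_of_subset b (Finset.nodup_toList S)
    (Finset.toList_toFinset S).subset
  refine ⟨S.toList, σ • f S, ?_, ?_⟩
  · rwa [ne_eq, smul_eq_zero_iff_eq, ← ne_eq, ← Finsupp.mem_support_iff]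
  · have hsub : ∀ T ∈ f.support, T ≠ S → ¬ S ⊆ T := fun T hT hTS hST =>
      hTS (Finset.eq_of_subset_of_card_le hST (hmax T hT)).symm
    conv_lhs => rw [← b.ExteriorAlgebra.linearCombination_repr a]
    rw [Finsupp.linearCombination_apply, map_finsuppSum, Finsupp.sum,
      Finset.sum_eq_single S (fun T hT hTS => by
        rw [map_smul, list_prod_contractLeft_coord_basis_of_not_subset b (Finset.nodup_toList S)
          (by rw [Finset.toList_toFinset]; exact hsub T hT hTS), smul_zero])
        (fun h => absurd hS h),
      map_smul, hσ, Finset.toList_toFinset, Finset.sdiff_self, basis_empty,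
      Algebra.algebraMap_eq_smul_one, smul_comm, smul_assoc]

end ExteriorAlgebra

namespace CliffordAlgebra

variable {R M : Type*} [CommRing R] [AddCommGroup M] [Module R M] {Q : QuadraticForm R M}

theorem contractLeft_involute (d : Module.Dual R M) (x : CliffordAlgebra Q) :
    contractLeft d (involute x) = -involute (contractLeft d x) := by
  induction x using left_induction with
  | algebraMap r => simp only [AlgHom.commutes, contractLeft_algebraMap, map_zero, neg_zero]
  | add x y hx hy => simp only [map_add, hx, hy, neg_add]
  | ι_mul x v hx =>
    rw [map_mul, involute_ι, neg_mul, map_neg, contractLeft_ι_mul, hx, contractLeft_ι_mul,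
      map_sub, map_smul, map_mul, involute_ι, mul_neg, neg_mul]

end CliffordAlgebra

namespace SpinDelta

open CliffordAlgebra

variable {m : ℕ} {U : Submodule ℂ (SpinDelta m)}

lemma Gop_Gop (x : SpinDelta m) : Gop m (Gop m x) = x := involute_involute x

lemma Gop_Xop (v : SpinW m) (x : SpinDelta m) : Gop m (Xop m v x) = -Xop m v (Gop m x) := by
  simp [Gop, Xop, involute_ι]

lemma Dop_Gop (lam : Module.Dual ℂ (SpinW m)) (x : SpinDelta m) :
    Dop m lam (Gop m x) = -Gop m (Dop m lam x) :=
  contractLeft_involute lam x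

lemma Dop_mem_or_Gop_Dop_mem (hD : ∀ lam, ∀ a ∈ U, Gop m (Dop m lam a) ∈ U)
    (lam : Module.Dual ℂ (SpinW m)) {x : SpinDelta m} (hx : x ∈ U ∨ Gop m x ∈ U) :
    Dop m lam x ∈ U ∨ Gop m (Dop m lam x) ∈ U := by
  rcases hx with hx | hx
  · exact Or.inr (hD lam x hx)
  · left
    simpa [Dop_Gop, Gop_Gop] using hD lam _ hx

lemma list_prod_Dop_mem_or_Gop_mem (hD : ∀ lam, ∀ a ∈ U, Gop m (Dop m lam a) ∈ U)
    (ls : List (Module.Dual ℂ (SpinW m))) {x : SpinDelta m} (hx : x ∈ U ∨ Gop m x ∈ U) :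
    (ls.map (Dop m)).prod x ∈ U ∨ Gop m ((ls.map (Dop m)).prod x) ∈ U := by
  induction ls with
  | nil => simpa using hx
  | cons lam ls ih => exact Dop_mem_or_Gop_Dop_mem hD lam ih

lemma eq_top_of_one_mem (hX : ∀ v, ∀ a ∈ U, Xop m v (Gop m a) ∈ U) (h1 : 1 ∈ U) : U = ⊤ := by
  let U' := U ⊓ U.comap (Gop m)
  have hmul : ∀ x y : SpinDelta m, y ∈ U' → x * y ∈ U' := by
    intro x
    induction x using CliffordAlgebra.induction with
    | algebraMap r => intro y hy; simpa [Algebra.algebraMap_eq_smul_one] using U'.smul_mem r hy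
    | ι v =>
      rintro y ⟨hy, hGy⟩
      have hXy : Xop m v y ∈ U := by simpa only [Gop_Gop] using hX v _ hGy
      have hGXy : Gop m (Xop m v y) ∈ U := by simpa only [Gop_Xop, neg_mem_iff] using hX v y hy
      exact ⟨hXy, hGXy⟩
    | mul x₁ x₂ h₁ h₂ => intro y hy; simpa [mul_assoc] using h₁ _ (h₂ y hy)
    | add x₁ x₂ h₁ h₂ => intro y hy; simpa [add_mul] using U'.add_mem (h₁ y hy) (h₂ y hy)
  refine Submodule.eq_top_iff'.mpr fun x => ?_
  simpa using (hmul x 1 ⟨h1, by simpa [Gop] using h1⟩).1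

end SpinDelta

theorem spin_rep_irreducible_general (m : ℕ) (U : Submodule ℂ (SpinDelta m))
    (h2 : ∀ (v : SpinW m), ∀ a ∈ U, Xop m v (Gop m a) ∈ U)
    (h4 : ∀ (lam : Module.Dual ℂ (SpinW m)), ∀ a ∈ U, Gop m (Dop m lam a) ∈ U) :
    U = ⊥ ∨ U = ⊤ := by
  refine or_iff_not_imp_left.mpr fun hU => ?_
  obtain ⟨a, haU, ha⟩ := Submodule.exists_mem_ne_zero_of_ne_bot hU
  obtain ⟨L, c, hc, hL⟩ :=
    ExteriorAlgebra.exists_list_prod_contractLeft_coord_eq_algebraMap (Pi.basisFun ℂ (Fin m)) ha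
  have hcU : algebraMap ℂ (SpinDelta m) c ∈ U := by
    simpa [List.map_map, Function.comp_def, Dop, hL, Gop] using
      SpinDelta.list_prod_Dop_mem_or_Gop_mem h4 (L.map (Pi.basisFun ℂ (Fin m)).coord) (Or.inl haU)
  refine SpinDelta.eq_top_of_one_mem h2 ?_
  rwa [Algebra.algebraMap_eq_smul_one, Submodule.smul_mem_iff _ hc] at hcU

/-- The spin representation of `𝔰𝔬(2m+1)` on `Δ = ⋀ W` is irreducible: if `U ⊆ Δ` is a
ℂ-linear subspace invariant under `X_v ∘ X_w`, `X_v ∘ D`, `X_v ∘ D_λ`, `D ∘ D_λ` and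
`D_λ ∘ D_μ` for all `v, w ∈ W` and `λ, μ ∈ W*`, then `U = 0` or `U = Δ`. -/
theorem spin_rep_irreducible (m : ℕ) (hm : 1 ≤ m) (U : Submodule ℂ (SpinDelta m))
    (h1 : ∀ (v w : SpinW m), ∀ a ∈ U, Xop m v (Xop m w a) ∈ U)
    (h2 : ∀ (v : SpinW m), ∀ a ∈ U, Xop m v (Gop m a) ∈ U)
    (h3 : ∀ (v : SpinW m) (lam : Module.Dual ℂ (SpinW m)), ∀ a ∈ U, Xop m v (Dop m lam a) ∈ U)
    (h4 : ∀ (lam : Module.Dual ℂ (SpinW m)), ∀ a ∈ U, Gop m (Dop m lam a) ∈ U)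
    (h5 : ∀ (lam mu : Module.Dual ℂ (SpinW m)), ∀ a ∈ U, Dop m lam (Dop m mu a) ∈ U) :
    U = ⊥ ∨ U = ⊤ :=
  spin_rep_irreducible_general m U h2 h4
end
end
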